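/- arXiv:math/0110045 — 6 statements merged into one kernel-verified Lean document; each statement's English description precedes it below -/
import Mathlib

section
/- Let m : ℝ → ℝ be even with m² controlled by itself (i.e., m² ≥ 0, m²(ξ) ≍ m²(ξ') for |ξ| ≍ |ξ'|, and |(m²)'(ξ)| ≤ C m²(ξ)/|ξ|, |(m²)''(ξ)| ≤ C m²(ξ)/|ξ|²). Define M₃(ξ₁,ξ₂,ξ₃) = m²(ξ₁)ξ₁ + m²(ξ₂)ξ₂ + m²(ξ₃)ξ₃. Then on the set where ξ₁ + ξ₂ + ξ₃ = 0, one has |M₃(ξ₁,ξ₂,ξ₃)| ≲ max(m²(ξ₁), m²(ξ₂), m²(ξ₃)) · min(|ξ₁|, |ξ₂|, |ξ₃|). -/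
/-- `m²` is controlled by itself: nonnegative, comparable at comparable
frequencies, and its first two derivatives are bounded by `m²(ξ)/|ξ|`,
`m²(ξ)/|ξ|²` respectively, away from the origin. -/
structure SqControlledBySelf (m : ℝ → ℝ) : Prop where
  smooth : ContDiff ℝ (⊤ : ℕ∞) m
  comparable : ∃ c > 0, ∀ ξ ξ' : ℝ, |ξ| ≤ 2 * |ξ'| → |ξ'| ≤ 2 * |ξ| →
      (m ξ) ^ 2 ≤ c * (m ξ') ^ 2
  bound : ∃ C > 0, ∀ ξ : ℝ, ξ ≠ 0 →
      |deriv (fun x => (m x) ^ 2) ξ| ≤ C * (m ξ) ^ 2 / |ξ| ∧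
      |deriv (deriv (fun x => (m x) ^ 2)) ξ| ≤ C * (m ξ) ^ 2 / |ξ| ^ 2

lemma M3_aux (m : ℝ → ℝ) (hm : ContDiff ℝ (⊤ : ℕ∞) m) (heven : ∀ ξ, m (-ξ) = m ξ)
    (c C : ℝ) (hc : 0 < c) (hC : 0 < C)
    (hcmp : ∀ ξ ξ' : ℝ, |ξ| ≤ 2 * |ξ'| → |ξ'| ≤ 2 * |ξ| → (m ξ) ^ 2 ≤ c * (m ξ') ^ 2)
    (hbd : ∀ ξ : ℝ, ξ ≠ 0 → |deriv (fun x => (m x) ^ 2) ξ| ≤ C * (m ξ) ^ 2 / |ξ|)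
    (ξ₁ ξ₂ ξ₃ : ℝ) (hsum : ξ₁ + ξ₂ + ξ₃ = 0) (h12 : |ξ₁| ≤ |ξ₂|) (h13 : |ξ₁| ≤ |ξ₃|) :
    |(m ξ₁) ^ 2 * ξ₁ + (m ξ₂) ^ 2 * ξ₂ + (m ξ₃) ^ 2 * ξ₃| ≤
      (1 + (C + 1) * c) * max ((m ξ₁) ^ 2) (max ((m ξ₂) ^ 2) ((m ξ₃) ^ 2)) * |ξ₁| := by
  set M := max ((m ξ₁) ^ 2) (max ((m ξ₂) ^ 2) ((m ξ₃) ^ 2)) with hM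
  have hMnn : 0 ≤ M := le_trans (sq_nonneg (m ξ₁)) (le_max_left _ _)
  have hM1 : (m ξ₁) ^ 2 ≤ M := le_max_left _ _
  have hM2 : (m ξ₂) ^ 2 ≤ M := le_trans (le_max_left _ _) (le_max_right _ _)
  by_cases h30 : ξ₃ = 0
  · have h21 : ξ₂ = -ξ₁ := by linarith
    have hzero : (m ξ₁) ^ 2 * ξ₁ + (m ξ₂) ^ 2 * ξ₂ + (m ξ₃) ^ 2 * ξ₃ = 0 := by
      rw [h30, h21, heven ξ₁]; ring
    rw [hzero, abs_zero]
    have : 0 ≤ (1 + (C + 1) * c) := by nlinarith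
    positivity
  · have h20 : ξ₂ ≠ 0 := by
      intro h
      apply h30
      rw [h, abs_zero] at h12
      have : ξ₁ = 0 := abs_eq_zero.mp (le_antisymm h12 (abs_nonneg _))
      rw [this, h] at hsum; linarith
    have habs2 : 0 < |ξ₂| := abs_pos.mpr h20
    have habs3 : 0 < |ξ₃| := abs_pos.mpr h30
    have hsign : ξ₂ * ξ₃ < 0 := by
      rcases lt_or_gt_of_ne h20 with h2 | h2 <;> rcases lt_or_gt_of_ne h30 with h3 | h3
      · exfalso
        rw [abs_of_neg h2] at h12
        have := le_abs_self ξ₁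
        linarith
      · exact mul_neg_of_neg_of_pos h2 h3
      · exact mul_neg_of_pos_of_neg h2 h3
      · exfalso
        rw [abs_of_pos h2] at h12
        have := neg_abs_le ξ₁
        linarith
    -- every point of the segment from ξ₂ to -ξ₃ is comparable to ξ₂
    have hseg : ∀ η ∈ Set.uIcc ξ₂ (-ξ₃), min |ξ₂| |ξ₃| ≤ |η| ∧ |η| ≤ max |ξ₂| |ξ₃| := by
      intro η hη
      rw [Set.mem_uIcc] at hη
      rcases lt_or_gt_of_ne h20 with h2 | h2
      · have h3 : 0 < ξ₃ := by nlinarith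
        rw [abs_of_neg h2, abs_of_pos h3]
        have hηneg : η < 0 := by rcases hη with ⟨a, b⟩ | ⟨a, b⟩ <;> linarith
        rw [abs_of_neg hηneg]
        constructor
        · rcases hη with ⟨a, b⟩ | ⟨a, b⟩
          · exact le_trans (min_le_right _ _) (by linarith)
          · exact le_trans (min_le_left _ _) (by linarith)
        · rcases hη with ⟨a, b⟩ | ⟨a, b⟩
          · exact le_trans (by linarith) (le_max_left (-ξ₂) ξ₃)
          · exact le_trans (by linarith) (le_max_right (-ξ₂) ξ₃)
      · have h3 : ξ₃ < 0 := by nlinarith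
        rw [abs_of_pos h2, abs_of_neg h3]
        have hηpos : 0 < η := by rcases hη with ⟨a, b⟩ | ⟨a, b⟩ <;> linarith
        rw [abs_of_pos hηpos]
        constructor
        · rcases hη with ⟨a, b⟩ | ⟨a, b⟩
          · exact le_trans (min_le_left _ _) (by linarith)
          · exact le_trans (min_le_right _ _) (by linarith)
        · rcases hη with ⟨a, b⟩ | ⟨a, b⟩
          · exact le_trans (by linarith) (le_max_right ξ₂ (-ξ₃))
          · exact le_trans (by linarith) (le_max_left ξ₂ (-ξ₃))
    -- triangle facts
    have ht3 : |ξ₃| ≤ |ξ₁| + |ξ₂| := by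
      have : ξ₃ = -ξ₁ + -ξ₂ := by linarith
      rw [this]
      calc |(-ξ₁) + (-ξ₂)| ≤ |(-ξ₁)| + |(-ξ₂)| := abs_add_le _ _
        _ = |ξ₁| + |ξ₂| := by rw [abs_neg, abs_neg]
    have ht2 : |ξ₂| ≤ |ξ₁| + |ξ₃| := by
      have : ξ₂ = -ξ₁ + -ξ₃ := by linarith
      rw [this]
      calc |(-ξ₁) + (-ξ₃)| ≤ |(-ξ₁)| + |(-ξ₃)| := abs_add_le _ _
        _ = |ξ₁| + |ξ₃| := by rw [abs_neg, abs_neg]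
    -- mean value estimate on g(x) = m(x)^2 * x
    have hgd : Differentiable ℝ (fun x => (m x) ^ 2) :=
      (hm.differentiable (by simp)).pow 2
    set g : ℝ → ℝ := fun x => (m x) ^ 2 * x with hg
    set g' : ℝ → ℝ := fun η => deriv (fun x => (m x) ^ 2) η * η + (m η) ^ 2 * 1 with hg'
    have hder : ∀ η ∈ Set.uIcc ξ₂ (-ξ₃), HasDerivWithinAt g (g' η) (Set.uIcc ξ₂ (-ξ₃)) η := by
      intro η _
      exact ((hgd η).hasDerivAt.mul (hasDerivAt_id η)).hasDerivWithinAt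
    have hbound : ∀ η ∈ Set.uIcc ξ₂ (-ξ₃), ‖g' η‖ ≤ (C + 1) * (c * (m ξ₂) ^ 2) := by
      intro η hη
      obtain ⟨hlo, hhi⟩ := hseg η hη
      have hηpos : 0 < |η| := lt_of_lt_of_le (lt_min habs2 habs3) hlo
      have hη0 : η ≠ 0 := abs_pos.mp hηpos
      have hup : |η| ≤ 2 * |ξ₂| := by
        rcases max_cases |ξ₂| |ξ₃| with ⟨he, _⟩ | ⟨he, _⟩ <;> rw [he] at hhi <;> linarith
      have hlo' : |ξ₂| ≤ 2 * |η| := by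
        rcases min_cases |ξ₂| |ξ₃| with ⟨he, _⟩ | ⟨he, _⟩ <;> rw [he] at hlo <;> linarith
      have hcmpη : (m η) ^ 2 ≤ c * (m ξ₂) ^ 2 := hcmp η ξ₂ hup hlo'
      have hd := hbd η hη0
      have h1 : |deriv (fun x => (m x) ^ 2) η * η| ≤ C * (m η) ^ 2 := by
        rw [abs_mul]
        calc |deriv (fun x => (m x) ^ 2) η| * |η| ≤ (C * (m η) ^ 2 / |η|) * |η| :=
              mul_le_mul_of_nonneg_right hd (abs_nonneg _)
          _ = C * (m η) ^ 2 := by field_simp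
      have : ‖g' η‖ = |deriv (fun x => (m x) ^ 2) η * η + (m η) ^ 2 * 1| := rfl
      rw [this]
      have h2 : |deriv (fun x => (m x) ^ 2) η * η + (m η) ^ 2 * 1| ≤
          |deriv (fun x => (m x) ^ 2) η * η| + |(m η) ^ 2 * 1| := abs_add_le _ _
      have h3 : |(m η) ^ 2 * 1| = (m η) ^ 2 := by
        rw [mul_one, abs_of_nonneg (sq_nonneg _)]
      have hsq : (m η) ^ 2 ≤ c * (m ξ₂) ^ 2 := hcmpη
      nlinarith [sq_nonneg (m η)]
    have hmvt : ‖g ξ₂ - g (-ξ₃)‖ ≤ (C + 1) * (c * (m ξ₂) ^ 2) * ‖ξ₂ - (-ξ₃)‖ :=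
      (convex_uIcc ξ₂ (-ξ₃)).norm_image_sub_le_of_norm_hasDerivWithin_le hder hbound
        (Set.right_mem_uIcc) (Set.left_mem_uIcc)
    have hdiff : ξ₂ - (-ξ₃) = -ξ₁ := by linarith
    have hgneg : g (-ξ₃) = -((m ξ₃) ^ 2 * ξ₃) := by
      simp only [hg, heven ξ₃]; ring
    have hmvt' : |(m ξ₂) ^ 2 * ξ₂ + (m ξ₃) ^ 2 * ξ₃| ≤ (C + 1) * (c * (m ξ₂) ^ 2) * |ξ₁| := by
      have : ‖g ξ₂ - g (-ξ₃)‖ = |(m ξ₂) ^ 2 * ξ₂ + (m ξ₃) ^ 2 * ξ₃| := by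
        rw [hgneg]; simp only [Real.norm_eq_abs, hg]; ring_nf
      rw [this] at hmvt
      rwa [hdiff, Real.norm_eq_abs, abs_neg] at hmvt
    calc |(m ξ₁) ^ 2 * ξ₁ + (m ξ₂) ^ 2 * ξ₂ + (m ξ₃) ^ 2 * ξ₃|
        ≤ |(m ξ₁) ^ 2 * ξ₁| + |(m ξ₂) ^ 2 * ξ₂ + (m ξ₃) ^ 2 * ξ₃| := by
          rw [add_assoc]; exact abs_add_le _ _
      _ ≤ M * |ξ₁| + (C + 1) * (c * (m ξ₂) ^ 2) * |ξ₁| := by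
          have : |(m ξ₁) ^ 2 * ξ₁| = (m ξ₁) ^ 2 * |ξ₁| := by
            rw [abs_mul, abs_of_nonneg (sq_nonneg _)]
          rw [this]
          exact add_le_add (mul_le_mul_of_nonneg_right hM1 (abs_nonneg _)) hmvt'
      _ ≤ (1 + (C + 1) * c) * M * |ξ₁| := by
          have hcc : (0:ℝ) ≤ (C + 1) * c := by positivity
          have hstep : (C + 1) * (c * (m ξ₂) ^ 2) ≤ (C + 1) * c * M := by
            calc (C + 1) * (c * (m ξ₂) ^ 2) = (C + 1) * c * (m ξ₂) ^ 2 := by ring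
              _ ≤ (C + 1) * c * M := mul_le_mul_of_nonneg_left hM2 hcc
          nlinarith [mul_le_mul_of_nonneg_right hstep (abs_nonneg ξ₁)]

theorem M3_pointwise_bound (m : ℝ → ℝ) (heven : ∀ ξ, m (-ξ) = m ξ)
    (hctrl : SqControlledBySelf m) :
    ∃ C > 0, ∀ ξ₁ ξ₂ ξ₃ : ℝ, ξ₁ + ξ₂ + ξ₃ = 0 →
      |(m ξ₁) ^ 2 * ξ₁ + (m ξ₂) ^ 2 * ξ₂ + (m ξ₃) ^ 2 * ξ₃| ≤
        C * max ((m ξ₁) ^ 2) (max ((m ξ₂) ^ 2) ((m ξ₃) ^ 2)) *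
          min |ξ₁| (min |ξ₂| |ξ₃|) := by
  obtain ⟨c, hc, hcmp⟩ := hctrl.comparable
  obtain ⟨C, hC, hbd⟩ := hctrl.bound
  refine ⟨1 + (C + 1) * c, by nlinarith, fun ξ₁ ξ₂ ξ₃ hsum => ?_⟩
  have hbd' : ∀ ξ : ℝ, ξ ≠ 0 → |deriv (fun x => (m x) ^ 2) ξ| ≤ C * (m ξ) ^ 2 / |ξ| :=
    fun ξ hξ => (hbd ξ hξ).1
  rcases le_total |ξ₁| |ξ₂| with h12 | h21
  · rcases le_total |ξ₁| |ξ₃| with h13 | h31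
    · -- ξ₁ is min
      have hmin : min |ξ₁| (min |ξ₂| |ξ₃|) = |ξ₁| :=
        min_eq_left (le_min h12 h13)
      rw [hmin]
      exact M3_aux m hctrl.smooth heven c C hc hC hcmp hbd' ξ₁ ξ₂ ξ₃ hsum h12 h13
    · -- ξ₃ is min
      have hmin : min |ξ₁| (min |ξ₂| |ξ₃|) = |ξ₃| :=
        le_antisymm ((min_le_right _ _).trans (min_le_right _ _))
          (le_min h31 (le_min (h31.trans h12) le_rfl))
      rw [hmin]
      have key := M3_aux m hctrl.smooth heven c C hc hC hcmp hbd' ξ₃ ξ₁ ξ₂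
        (by linarith) h31 (h31.trans h12)
      calc |(m ξ₁) ^ 2 * ξ₁ + (m ξ₂) ^ 2 * ξ₂ + (m ξ₃) ^ 2 * ξ₃|
          = |(m ξ₃) ^ 2 * ξ₃ + (m ξ₁) ^ 2 * ξ₁ + (m ξ₂) ^ 2 * ξ₂| := by
            congr 1; ring
        _ ≤ (1 + (C + 1) * c) * max ((m ξ₃) ^ 2) (max ((m ξ₁) ^ 2) ((m ξ₂) ^ 2)) * |ξ₃| := key
        _ = (1 + (C + 1) * c) * max ((m ξ₁) ^ 2) (max ((m ξ₂) ^ 2) ((m ξ₃) ^ 2)) * |ξ₃| := by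
            rw [max_left_comm, max_comm ((m ξ₃) ^ 2) ((m ξ₂) ^ 2)]
  · rcases le_total |ξ₂| |ξ₃| with h23 | h32
    · -- ξ₂ is min
      have hmin : min |ξ₁| (min |ξ₂| |ξ₃|) = |ξ₂| := by
        rw [min_eq_left h23, min_eq_right h21]
      rw [hmin]
      have key := M3_aux m hctrl.smooth heven c C hc hC hcmp hbd' ξ₂ ξ₁ ξ₃
        (by linarith) h21 h23
      calc |(m ξ₁) ^ 2 * ξ₁ + (m ξ₂) ^ 2 * ξ₂ + (m ξ₃) ^ 2 * ξ₃|
          = |(m ξ₂) ^ 2 * ξ₂ + (m ξ₁) ^ 2 * ξ₁ + (m ξ₃) ^ 2 * ξ₃| := by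
            congr 1; ring
        _ ≤ (1 + (C + 1) * c) * max ((m ξ₂) ^ 2) (max ((m ξ₁) ^ 2) ((m ξ₃) ^ 2)) * |ξ₂| := key
        _ = (1 + (C + 1) * c) * max ((m ξ₁) ^ 2) (max ((m ξ₂) ^ 2) ((m ξ₃) ^ 2)) * |ξ₂| := by
            rw [max_left_comm]
    · -- ξ₃ is min
      have h31 : |ξ₃| ≤ |ξ₁| := h32.trans h21
      have hmin : min |ξ₁| (min |ξ₂| |ξ₃|) = |ξ₃| := by
        rw [min_eq_right h32, min_eq_right h31]
      rw [hmin]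
      have key := M3_aux m hctrl.smooth heven c C hc hC hcmp hbd' ξ₃ ξ₁ ξ₂
        (by linarith) h31 h32
      calc |(m ξ₁) ^ 2 * ξ₁ + (m ξ₂) ^ 2 * ξ₂ + (m ξ₃) ^ 2 * ξ₃|
          = |(m ξ₃) ^ 2 * ξ₃ + (m ξ₁) ^ 2 * ξ₁ + (m ξ₂) ^ 2 * ξ₂| := by
            congr 1; ring
        _ ≤ (1 + (C + 1) * c) * max ((m ξ₃) ^ 2) (max ((m ξ₁) ^ 2) ((m ξ₂) ^ 2)) * |ξ₃| := key
        _ = (1 + (C + 1) * c) * max ((m ξ₁) ^ 2) (max ((m ξ₂) ^ 2) ((m ξ₃) ^ 2)) * |ξ₃| := by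
            rw [max_left_comm, max_comm ((m ξ₃) ^ 2) ((m ξ₂) ^ 2)]
end

section
/- Let m be an even real-valued function on ℝ, and on the hyperplane ξ₁ + ξ₂ + ξ₃ + ξ₄ = 0 define M₄ = −(1/2)[ (2m²(ξ₁)ξ₁ + m²(ξ₃+ξ₄)(ξ₃+ξ₄)) / (3ξ₁ξ₂) ]_{sym}, where [·]_{sym} denotes symmetrization over permutations of (ξ₁,ξ₂,ξ₃,ξ₄). Then M₄ = −(1/108)·(α₄/(ξ₁ξ₂ξ₃ξ₄))·[m²(ξ₁)+m²(ξ₂)+m²(ξ₃)+m²(ξ₄) − m²(ξ₁+ξ₂) − m²(ξ₁+ξ₃) − m²(ξ₁+ξ₄)] + (1/36)·[m²(ξ₁)/ξ₁ + m²(ξ₂)/ξ₂ + m²(ξ₃)/ξ₃ + m²(ξ₄)/ξ₄], where α₄ = ξ₁³+ξ₂³+ξ₃³+ξ₄³ = 3(ξ₁+ξ₂)(ξ₁+ξ₃)(ξ₁+ξ₄). -/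
open Finset

noncomputable def sym4 (f : (Fin 4 → ℝ) → ℝ) (ξ : Fin 4 → ℝ) : ℝ :=
  (1 / 24) * ∑ σ : Equiv.Perm (Fin 4), f (ξ ∘ σ)

lemma perm4_sum (h : Equiv.Perm (Fin 4) → ℝ) :
    ∑ σ : Equiv.Perm (Fin 4), h σ =
      ∑ i : Fin 4, ∑ j : Fin 3, ∑ k : Fin 2,
        h (Equiv.Perm.decomposeFin.symm (i, Equiv.Perm.decomposeFin.symm (j, Equiv.Perm.decomposeFin.symm (k, 1)))) := by
  rw [← (Equiv.Perm.decomposeFin (n := 3)).symm.sum_comp, Fintype.sum_prod_type]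
  refine Finset.sum_congr rfl fun i _ => ?_
  rw [← (Equiv.Perm.decomposeFin (n := 2)).symm.sum_comp, Fintype.sum_prod_type]
  refine Finset.sum_congr rfl fun j _ => ?_
  rw [← (Equiv.Perm.decomposeFin (n := 1)).symm.sum_comp, Fintype.sum_prod_type]
  refine Finset.sum_congr rfl fun k _ => ?_
  rw [Finset.sum_eq_single 1] <;> simp [Subsingleton.elim _ (1 : Equiv.Perm (Fin 1))]

set_option maxHeartbeats 2000000 in
theorem M4_identity (m : ℝ → ℝ) (heven : ∀ ξ, m (-ξ) = m ξ)
    (ξ : Fin 4 → ℝ) (hsum : ξ 0 + ξ 1 + ξ 2 + ξ 3 = 0)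
    (hne : ∀ i, ξ i ≠ 0) :
    sym4 (fun x => -(1 / 2) *
        ((2 * (m (x 0)) ^ 2 * x 0 + (m (x 2 + x 3)) ^ 2 * (x 2 + x 3)) /
          (3 * x 0 * x 1))) ξ =
      -(1 / 108) *
          ((ξ 0 ^ 3 + ξ 1 ^ 3 + ξ 2 ^ 3 + ξ 3 ^ 3) / (ξ 0 * ξ 1 * ξ 2 * ξ 3)) *
          ((m (ξ 0)) ^ 2 + (m (ξ 1)) ^ 2 + (m (ξ 2)) ^ 2 + (m (ξ 3)) ^ 2 -
            (m (ξ 0 + ξ 1)) ^ 2 - (m (ξ 0 + ξ 2)) ^ 2 - (m (ξ 0 + ξ 3)) ^ 2) +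
        (1 / 36) *
          ((m (ξ 0)) ^ 2 / ξ 0 + (m (ξ 1)) ^ 2 / ξ 1 + (m (ξ 2)) ^ 2 / ξ 2 +
            (m (ξ 3)) ^ 2 / ξ 3) := by
  rw [sym4, perm4_sum]
  simp only [show (3:Fin 4)=Fin.succ 2 from rfl, show (2:Fin 4)=Fin.succ 1 from rfl,
    show (2:Fin 3)=Fin.succ 1 from rfl, show (1:Fin 3)=Fin.succ 0 from rfl,
    show (1:Fin 2)=Fin.succ 0 from rfl,
    Fin.sum_univ_succ, Fin.sum_univ_zero, Function.comp_def,
    Equiv.Perm.decomposeFin_symm_apply_zero, Equiv.Perm.decomposeFin_symm_apply_one,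
    Equiv.Perm.decomposeFin_symm_apply_succ, Equiv.Perm.one_apply]
  simp only [Equiv.swap_apply_def]
  norm_num [Fin.ext_iff]
  simp only [show (Fin.succ 2 : Fin 4) = 3 from rfl]
  have e1 : m (ξ 2 + ξ 3) = m (ξ 0 + ξ 1) := by
    rw [show ξ 2 + ξ 3 = -(ξ 0 + ξ 1) by linarith, heven]
  have e1' : m (ξ 3 + ξ 2) = m (ξ 0 + ξ 1) := by
    rw [show ξ 3 + ξ 2 = -(ξ 0 + ξ 1) by linarith, heven]
  have e2 : m (ξ 1 + ξ 3) = m (ξ 0 + ξ 2) := by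
    rw [show ξ 1 + ξ 3 = -(ξ 0 + ξ 2) by linarith, heven]
  have e2' : m (ξ 3 + ξ 1) = m (ξ 0 + ξ 2) := by
    rw [show ξ 3 + ξ 1 = -(ξ 0 + ξ 2) by linarith, heven]
  have e3 : m (ξ 1 + ξ 2) = m (ξ 0 + ξ 3) := by
    rw [show ξ 1 + ξ 2 = -(ξ 0 + ξ 3) by linarith, heven]
  have e3' : m (ξ 2 + ξ 1) = m (ξ 0 + ξ 3) := by
    rw [show ξ 2 + ξ 1 = -(ξ 0 + ξ 3) by linarith, heven]
  have e4 : m (ξ 3 + ξ 0) = m (ξ 0 + ξ 3) := by rw [add_comm]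
  have e5 : m (ξ 2 + ξ 0) = m (ξ 0 + ξ 2) := by rw [add_comm]
  have e6 : m (ξ 1 + ξ 0) = m (ξ 0 + ξ 1) := by rw [add_comm]
  simp only [e1, e1', e2, e2', e3, e3', e4, e5, e6]
  have h0 := hne 0; have h1 := hne 1; have h2 := hne 2; have h3 := hne 3
  set a := ξ 0 with ha
  set b := ξ 1 with hb
  set c := ξ 2 with hc
  set d := ξ 3 with hd
  have hdv : d = -(a + b + c) := by linarith
  field_simp [h0, h1, h2, h3]
  rw [hdv]
  ring
end

section
/- Let m : ℝ → ℝ be even and on ξ₁+ξ₂+ξ₃+ξ₄ = 0 with all ξᵢ ≠ 0, the quantity [2m²(ξ₁)ξ₁ / (3ξ₁ξ₂)]_{sym} (symmetrization over S₄) equals (1/54)[m²(ξ₁)+m²(ξ₂)+m²(ξ₃)+m²(ξ₄)]·α₄/(ξ₁ξ₂ξ₃ξ₄) − (1/18)[m²(ξ₁)/ξ₁ + m²(ξ₂)/ξ₂ + m²(ξ₃)/ξ₃ + m²(ξ₄)/ξ₄], where α₄ = ξ₁³+ξ₂³+ξ₃³+ξ₄³. -/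
/-!
After cancelling `ξ₁`, the symmetrised term is `(1/18) ∑_{i ≠ j} m²(ξᵢ)/ξⱼ`, that is
`(1/18) (∑ᵢ m²(ξᵢ)) (∑ⱼ 1/ξⱼ)` minus the diagonal `(1/18) ∑ᵢ m²(ξᵢ)/ξᵢ`. On the hyperplane
`ξ₁ + ξ₂ + ξ₃ + ξ₄ = 0` Newton's identity gives `α₄ = 3 e₃(ξ)`, hence
`∑ⱼ 1/ξⱼ = e₃/e₄ = α₄ / (3 ξ₁ξ₂ξ₃ξ₄)`.
-/

open Finset

open Equiv Nat

section PermSums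

variable {M : Type*}

theorem sum_perm_apply_zero [AddCommMonoid M] (n : ℕ) (h : Fin (n + 1) → M) :
    ∑ σ : Perm (Fin (n + 1)), h (σ 0) = n ! • ∑ i, h i := by
  rw [← Perm.decomposeFin.symm.sum_comp, Fintype.sum_prod_type, smul_sum]
  simp [Fintype.card_perm]

theorem sum_swap_zero_succ [AddCommGroup M] {n : ℕ} (p : Fin (n + 1)) (f : Fin (n + 1) → M) :
    ∑ k : Fin n, f (swap 0 p k.succ) = ∑ j, f j - f p := by
  have h := Fin.sum_univ_succ (fun k => f (swap 0 p k))
  rw [Equiv.sum_comp (swap 0 p) f, swap_apply_left] at h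
  rw [h]
  abel

/-- Each ordered pair `(i, j)` with `i ≠ j` is `(σ 0, σ 1)` for exactly `n !` permutations `σ`. -/
theorem sum_perm_apply_zero_apply_one [AddCommGroup M] (n : ℕ)
    (g : Fin (n + 2) → Fin (n + 2) → M) :
    ∑ σ : Perm (Fin (n + 2)), g (σ 0) (σ 1) = n ! • (∑ i, ∑ j, g i j - ∑ i, g i i) := by
  rw [← Perm.decomposeFin.symm.sum_comp, Fintype.sum_prod_type]
  simp only [Perm.decomposeFin_symm_apply_zero, Perm.decomposeFin_symm_apply_one]
  have inner (p : Fin (n + 2)) :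
      ∑ τ : Perm (Fin (n + 1)), g p (swap 0 p (τ 0).succ) = n ! • (∑ j, g p j - g p p) := by
    rw [sum_perm_apply_zero n (fun k => g p (swap 0 p k.succ)), sum_swap_zero_succ]
  simp only [inner, ← smul_sum, sum_sub_distrib]

end PermSums

theorem cube_sum_eq_of_sum_eq_zero {R : Type*} [CommRing R] {a b c d : R}
    (h : a + b + c + d = 0) :
    a ^ 3 + b ^ 3 + c ^ 3 + d ^ 3 = 3 * (a * b * c + a * b * d + a * c * d + b * c * d) := by
  linear_combination ((a + b + c + d) ^ 2 - 3 * (a * b + a * c + a * d + b * c + b * d + c * d)) * h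

theorem inv_sum_eq_cube_sum_div_of_sum_eq_zero {K : Type*} [Field K] [CharZero K] {a b c d : K}
    (ha : a ≠ 0) (hb : b ≠ 0) (hc : c ≠ 0) (hd : d ≠ 0) (h : a + b + c + d = 0) :
    a⁻¹ + b⁻¹ + c⁻¹ + d⁻¹ = (a ^ 3 + b ^ 3 + c ^ 3 + d ^ 3) / (3 * (a * b * c * d)) := by
  rw [cube_sum_eq_of_sum_eq_zero h]
  field_simp
  ring

theorem M4_first_term_identity_general (m : ℝ → ℝ)
    (ξ : Fin 4 → ℝ) (hsum : ξ 0 + ξ 1 + ξ 2 + ξ 3 = 0)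
    (hne : ∀ i, ξ i ≠ 0) :
    sym4 (fun x => (2 * (m (x 0)) ^ 2 * x 0) / (3 * x 0 * x 1)) ξ =
      (1 / 54) *
          ((m (ξ 0)) ^ 2 + (m (ξ 1)) ^ 2 + (m (ξ 2)) ^ 2 + (m (ξ 3)) ^ 2) *
          ((ξ 0 ^ 3 + ξ 1 ^ 3 + ξ 2 ^ 3 + ξ 3 ^ 3) /
            (ξ 0 * ξ 1 * ξ 2 * ξ 3)) -
        (1 / 18) *
          ((m (ξ 0)) ^ 2 / ξ 0 + (m (ξ 1)) ^ 2 / ξ 1 + (m (ξ 2)) ^ 2 / ξ 2 +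
            (m (ξ 3)) ^ 2 / ξ 3) := by
  set w : Fin 4 → ℝ := fun i => m (ξ i) ^ 2
  have hsummand (σ : Perm (Fin 4)) :
      2 * m ((ξ ∘ σ) 0) ^ 2 * (ξ ∘ σ) 0 / (3 * (ξ ∘ σ) 0 * (ξ ∘ σ) 1) =
        2 / 3 * (w (σ 0) * (ξ (σ 1))⁻¹) := by
    have := hne (σ 0)
    simp only [Function.comp_apply, w]
    field_simp
  calc sym4 (fun x => (2 * (m (x 0)) ^ 2 * x 0) / (3 * x 0 * x 1)) ξ
      = 1 / 24 * (2 / 3 * ∑ σ : Perm (Fin 4), w (σ 0) * (ξ (σ 1))⁻¹) := by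
        simp only [sym4, hsummand, mul_sum]
    _ = 1 / 18 * ((∑ i, w i) * ∑ j, (ξ j)⁻¹ - ∑ i, w i / ξ i) := by
        rw [sum_perm_apply_zero_apply_one 2 (fun i j => w i * (ξ j)⁻¹), sum_mul_sum]
        simp only [nsmul_eq_mul, div_eq_mul_inv, Nat.factorial_two, Nat.cast_ofNat]
        ring
    _ = _ := by
        simp only [Fin.sum_univ_four, inv_sum_eq_cube_sum_div_of_sum_eq_zero (hne 0) (hne 1)
          (hne 2) (hne 3) hsum, w]
        ring

theorem M4_first_term_identity (m : ℝ → ℝ) (heven : ∀ ξ, m (-ξ) = m ξ)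
    (ξ : Fin 4 → ℝ) (hsum : ξ 0 + ξ 1 + ξ 2 + ξ 3 = 0)
    (hne : ∀ i, ξ i ≠ 0) :
    sym4 (fun x => (2 * (m (x 0)) ^ 2 * x 0) / (3 * x 0 * x 1)) ξ =
      (1 / 54) *
          ((m (ξ 0)) ^ 2 + (m (ξ 1)) ^ 2 + (m (ξ 2)) ^ 2 + (m (ξ 3)) ^ 2) *
          ((ξ 0 ^ 3 + ξ 1 ^ 3 + ξ 2 ^ 3 + ξ 3 ^ 3) /
            (ξ 0 * ξ 1 * ξ 2 * ξ 3)) -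
        (1 / 18) *
          ((m (ξ 0)) ^ 2 / ξ 0 + (m (ξ 1)) ^ 2 / ξ 1 + (m (ξ 2)) ^ 2 / ξ 2 +
            (m (ξ 3)) ^ 2 / ξ 3) :=
  M4_first_term_identity_general m ξ hsum hne
end

section
/- Fix a nonzero integer ξ. For every dyadic M ≥ 1 there exists δ > 0 (independent of ξ and M) such that the Lebesgue measure of the set {μ ∈ ℝ : |μ| ∼ M and μ = −3ξξ₁ξ₂ + O(⟨ξξ₁ξ₂⟩^{1/100}) for some nonzero integers ξ₁, ξ₂ with ξ = ξ₁ + ξ₂} is at most C·M^{1−δ}; in fact one may take the bound C·M^{3/4}. -/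
open MeasureTheory Metric

/-! For `|μ| ≲ M` the resonance `x = ξξ₁ξ₂` satisfies `|x| ≲ M`, so the smaller of `|ξ₁|, |ξ₂|`
is at most `√(2M)` (as `|ξ| ≥ 1`). Hence the set is covered by `O(√M)` intervals centred at the
values `-3ξm(ξ - m)`, `|m| ≤ √(2M)`, each of radius `⟨x⟩^{1/100} ≲ M^{1/4}`, of total length
`O(M^{3/4})`. -/

lemma volume_biUnion_closedBall_le {ι : Type*} (s : Finset ι) (c : ι → ℝ) (r : ℝ) :
    volume (⋃ i ∈ s, closedBall (c i) r) ≤ ENNReal.ofReal (s.card * (2 * r)) := by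
  calc volume (⋃ i ∈ s, closedBall (c i) r)
      ≤ ∑ i ∈ s, volume (closedBall (c i) r) := measure_biUnion_finset_le _ _
    _ = ENNReal.ofReal (s.card * (2 * r)) := by
      simp only [Real.volume_closedBall, Finset.sum_const, nsmul_eq_mul,
        ENNReal.ofReal_mul (Nat.cast_nonneg _), ENNReal.ofReal_natCast]

lemma Int.card_Icc_neg_self (N : ℕ) : (Finset.Icc (-N : ℤ) N).card = 2 * N + 1 := by
  rw [Int.card_Icc]
  omega

lemma Int.mem_Icc_floor_sqrt_of_sq_le {m : ℤ} {K : ℝ} (h : (m : ℝ) ^ 2 ≤ K) :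
    m ∈ Finset.Icc (-⌊√K⌋₊ : ℤ) ⌊√K⌋₊ := by
  have hm : m.natAbs ≤ ⌊√K⌋₊ := by
    apply Nat.le_floor
    rw [Nat.cast_natAbs, Int.cast_abs]
    exact Real.abs_le_sqrt h
  rw [Finset.mem_Icc]
  omega

lemma two_mul_floor_sqrt_add_one_le {M : ℝ} (hM : 1 ≤ M) :
    2 * (⌊√(2 * M)⌋₊ : ℝ) + 1 ≤ 4 * √M := by
  have h_sqrt_two : √2 ≤ 3 / 2 := Real.sqrt_le_iff.mpr ⟨by norm_num, by norm_num⟩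
  have h_one : 1 ≤ √M := Real.one_le_sqrt.mpr hM
  have h_floor : (⌊√(2 * M)⌋₊ : ℝ) ≤ √2 * √M := by
    rw [← Real.sqrt_mul zero_le_two]
    exact Nat.floor_le (Real.sqrt_nonneg _)
  nlinarith [Real.sqrt_nonneg M]

lemma two_mul_abs_le_of_abs_add_three_mul_le {μ x p : ℝ} (hp : p ≤ 1)
    (h : |μ + 3 * x| ≤ (2 + |x|) ^ p) : 2 * |x| ≤ |μ| + 2 := by
  have h_rpow : (2 + |x|) ^ p ≤ 2 + |x| := by
    simpa using Real.rpow_le_rpow_of_exponent_le (by linarith [abs_nonneg x]) hp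
  have h_tri : |3 * x| ≤ |μ + 3 * x| + |μ| := by
    simpa using abs_sub_le (μ + 3 * x) 0 μ
  rw [abs_mul, abs_of_pos three_pos] at h_tri
  linarith

lemma rpow_le_two_mul_rpow_one_fourth {y M p : ℝ} (hy : 1 ≤ y) (hyM : y ≤ 16 * M)
    (hp : p ≤ 1 / 4) : y ^ p ≤ 2 * M ^ (1 / 4 : ℝ) := by
  have hM : 0 ≤ M := by linarith
  calc y ^ p ≤ y ^ (1 / 4 : ℝ) := Real.rpow_le_rpow_of_exponent_le hy hp
    _ ≤ (16 * M) ^ (1 / 4 : ℝ) := Real.rpow_le_rpow (by linarith) hyM (by norm_num)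
    _ = 2 * M ^ (1 / 4 : ℝ) := by
      rw [Real.mul_rpow (by norm_num) hM]
      congr 1
      rw [show (16 : ℝ) = 2 ^ 4 by norm_num, ← Real.rpow_natCast, ← Real.rpow_mul zero_le_two]
      norm_num

lemma Int.exists_sq_le_abs_mul_mul {ξ ξ₁ ξ₂ : ℤ} (hξ : ξ ≠ 0) (hsum : ξ₁ + ξ₂ = ξ) :
    ∃ m : ℤ, m ^ 2 ≤ |ξ * ξ₁ * ξ₂| ∧ ξ * m * (ξ - m) = ξ * ξ₁ * ξ₂ := by
  have h_sq_le (a b : ℤ) (hab : |a| ≤ |b|) : a ^ 2 ≤ |ξ| * |a| * |b| := by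
    rw [← sq_abs, sq, mul_assoc]
    exact (mul_le_mul_of_nonneg_left hab (abs_nonneg a)).trans
      (le_mul_of_one_le_left (by positivity) (Int.one_le_abs hξ))
  rw [abs_mul, abs_mul]
  rcases le_total |ξ₁| |ξ₂| with h | h
  · exact ⟨ξ₁, h_sq_le ξ₁ ξ₂ h, by rw [← hsum]; ring⟩
  · exact ⟨ξ₂, mul_right_comm |ξ| |ξ₁| |ξ₂| ▸ h_sq_le ξ₂ ξ₁ h, by rw [← hsum]; ring⟩

lemma mem_biUnion_closedBall_of_abs_add_resonance_le {ξ ξ₁ ξ₂ : ℤ} {μ M : ℝ} (hξ : ξ ≠ 0)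
    (hM : 1 ≤ M) (hμ : |μ| ≤ 2 * M) (hsum : ξ₁ + ξ₂ = ξ)
    (hres : |μ + 3 * (ξ : ℝ) * ξ₁ * ξ₂| ≤ (2 + |(ξ : ℝ) * ξ₁ * ξ₂|) ^ (1 / 100 : ℝ)) :
    μ ∈ ⋃ m ∈ Finset.Icc (-⌊√(2 * M)⌋₊ : ℤ) ⌊√(2 * M)⌋₊,
      closedBall (-3 * (ξ : ℝ) * m * (ξ - m)) (2 * M ^ (1 / 4 : ℝ)) := by
  set x : ℝ := ξ * ξ₁ * ξ₂ with hx
  have hres' : |μ + 3 * x| ≤ (2 + |x|) ^ (1 / 100 : ℝ) := by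
    rwa [hx, ← mul_assoc, ← mul_assoc]
  have hx_le : 2 * |x| ≤ |μ| + 2 := two_mul_abs_le_of_abs_add_three_mul_le (by norm_num) hres'
  obtain ⟨m, hm_sq, hm_eq⟩ := Int.exists_sq_le_abs_mul_mul hξ hsum
  have hm_sq' : (m : ℝ) ^ 2 ≤ 2 * M := by
    have : ((m ^ 2 : ℤ) : ℝ) ≤ |x| := by rw [hx]; exact_mod_cast hm_sq
    push_cast at this
    linarith
  have hm_eq' : -3 * (ξ : ℝ) * m * (ξ - m) = -(3 * x) := by
    rw [hx]
    have : ((ξ * m * (ξ - m) : ℤ) : ℝ) = ((ξ * ξ₁ * ξ₂ : ℤ) : ℝ) := by rw [hm_eq]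
    push_cast at this
    linear_combination -3 * this
  refine Set.mem_biUnion (Int.mem_Icc_floor_sqrt_of_sq_le hm_sq') ?_
  rw [mem_closedBall, Real.dist_eq, hm_eq', sub_neg_eq_add]
  exact hres'.trans (rpow_le_two_mul_rpow_one_fourth (by linarith [abs_nonneg x])
    (by linarith) (by norm_num))

theorem resonance_set_measure_bound :
    ∃ C > 0, ∀ ξ : ℤ, ξ ≠ 0 → ∀ M : ℝ, 1 ≤ M → (∃ k : ℕ, M = 2 ^ k) →
      volume {μ : ℝ | (M ≤ |μ| ∧ |μ| ≤ 2 * M) ∧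
          ∃ ξ₁ ξ₂ : ℤ, ξ₁ ≠ 0 ∧ ξ₂ ≠ 0 ∧ ξ₁ + ξ₂ = ξ ∧
            |μ + 3 * (ξ : ℝ) * (ξ₁ : ℝ) * (ξ₂ : ℝ)| ≤
              (2 + |(ξ : ℝ) * (ξ₁ : ℝ) * (ξ₂ : ℝ)|) ^ ((1 : ℝ) / 100)} ≤
        ENNReal.ofReal (C * M ^ ((3 : ℝ) / 4)) := by
  refine ⟨16, by norm_num, fun ξ hξ M hM _ => ?_⟩
  have h_quarter : √M * M ^ (1 / 4 : ℝ) = M ^ (3 / 4 : ℝ) := by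
    rw [Real.sqrt_eq_rpow, ← Real.rpow_add (by linarith)]
    norm_num
  calc _ ≤ volume (⋃ m ∈ Finset.Icc (-⌊√(2 * M)⌋₊ : ℤ) ⌊√(2 * M)⌋₊,
          closedBall (-3 * (ξ : ℝ) * m * (ξ - m)) (2 * M ^ (1 / 4 : ℝ))) := by
        refine measure_mono ?_
        rintro μ ⟨⟨-, hμM⟩, ξ₁, ξ₂, -, -, hsum, hres⟩
        exact mem_biUnion_closedBall_of_abs_add_resonance_le hξ hM hμM hsum hres
    _ ≤ _ := volume_biUnion_closedBall_le _ _ _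
    _ ≤ ENNReal.ofReal (16 * M ^ ((3 : ℝ) / 4)) := by
        refine ENNReal.ofReal_le_ofReal ?_
        rw [Int.card_Icc_neg_self, ← h_quarter]
        push_cast
        nlinarith [two_mul_floor_sqrt_add_one_le hM,
          Real.rpow_nonneg (zero_le_one.trans hM) (1 / 4 : ℝ)]
end

section
/- Suppose m is even, real-valued, and m(ξ) = 1 for |ξ| < N/2. Then the symmetrized multiplier M₄ (defined as −(1/2)[(2m²(ξ₁)ξ₁ + m²(ξ₃+ξ₄)(ξ₃+ξ₄))/(3ξ₁ξ₂)]_{sym} on ξ₁+ξ₂+ξ₃+ξ₄ = 0) vanishes identically on the region where |ξᵢ| < N/4 for all i = 1,2,3,4. -/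
open Finset

theorem M4_vanishes_at_low_frequencies (N : ℝ) (m : ℝ → ℝ)
    (heven : ∀ ξ, m (-ξ) = m ξ)
    (hlow : ∀ ξ : ℝ, |ξ| < N / 2 → m ξ = 1)
    (ξ : Fin 4 → ℝ) (hsum : ξ 0 + ξ 1 + ξ 2 + ξ 3 = 0)
    (hne : ∀ i, ξ i ≠ 0) (hsmall : ∀ i, |ξ i| < N / 4) :
    sym4 (fun x => -(1 / 2) *
        ((2 * (m (x 0)) ^ 2 * x 0 + (m (x 2 + x 3)) ^ 2 * (x 2 + x 3)) /
          (3 * x 0 * x 1))) ξ = 0 := by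
  have hN : 0 < N := by
    have h0 := hsmall 0
    have h1 : 0 < |ξ 0| := abs_pos.mpr (hne 0)
    linarith
  have hm : ∀ i : Fin 4, m (ξ i) = 1 := fun i => hlow _ (by linarith [hsmall i])
  have hm2 : ∀ i j : Fin 4, m (ξ i + ξ j) = 1 := fun i j =>
    hlow _ (lt_of_le_of_lt (abs_add_le _ _) (by linarith [hsmall i, hsmall j]))
  unfold sym4
  rw [mul_eq_zero]
  right
  set F : Equiv.Perm (Fin 4) → ℝ := fun σ => -(1 / 2) *
      ((2 * (m (ξ (σ 0))) ^ 2 * ξ (σ 0) + (m (ξ (σ 2) + ξ (σ 3))) ^ 2 * (ξ (σ 2) + ξ (σ 3))) /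
        (3 * ξ (σ 0) * ξ (σ 1))) with hF
  have : ∑ σ : Equiv.Perm (Fin 4), F σ = 0 := by
    apply Finset.sum_involution (fun σ _ => σ * Equiv.swap 0 1)
    · intro σ _
      have hsumσ : ξ (σ 0) + ξ (σ 1) + ξ (σ 2) + ξ (σ 3) = 0 := by
        have := Equiv.sum_comp σ ξ
        rw [Fin.sum_univ_four, Fin.sum_univ_four] at this
        linarith [hsum]
      have hcd : ξ (σ 2) + ξ (σ 3) = -(ξ (σ 0) + ξ (σ 1)) := by linarith
      simp only [hF, Equiv.Perm.mul_apply]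
      rw [show Equiv.swap (0:Fin 4) 1 0 = 1 by decide, show Equiv.swap (0:Fin 4) 1 1 = 0 by decide,
        show Equiv.swap (0:Fin 4) 1 2 = 2 by decide, show Equiv.swap (0:Fin 4) 1 3 = 3 by decide]
      simp only [hm, hm2]
      rw [hcd]
      ring
    · intro σ _ _
      intro h
      have h0 : σ 1 = σ 0 := by
        have := congrArg (fun τ : Equiv.Perm (Fin 4) => τ 0) h
        simpa [Equiv.Perm.mul_apply] using this
      exact absurd (σ.injective h0) (by decide)
    · intro σ _
      rw [mul_assoc, Equiv.swap_mul_self, mul_one]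
    · intro σ _; exact Finset.mem_univ _
  calc ∑ σ : Equiv.Perm (Fin 4), (fun x => -(1 / 2) *
        ((2 * (m (x 0)) ^ 2 * x 0 + (m (x 2 + x 3)) ^ 2 * (x 2 + x 3)) /
          (3 * x 0 * x 1))) (ξ ∘ σ) = ∑ σ : Equiv.Perm (Fin 4), F σ := by
        apply Finset.sum_congr rfl; intro σ _; rfl
    _ = 0 := this
end

section
/- On the hyperplane ξ₁ + ξ₂ + ξ₃ = 0 with all |ξᵢ| ≥ 1, the inequality 1 ≤ C·(⟨τ₁−ξ₁³⟩^{1/2} + ⟨τ₂−ξ₂³⟩^{1/2} + ⟨τ₃−ξ₃³⟩^{1/2}) / (⟨ξ₁⟩^{1/2}⟨ξ₂⟩^{1/2}⟨ξ₃⟩^{1/2}) holds whenever τ₁ + τ₂ + τ₃ = 0, where ⟨x⟩ = 2 + |x|. -/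
theorem periodic_weight_inequality :
    ∃ C > 0, ∀ ξ₁ ξ₂ ξ₃ τ₁ τ₂ τ₃ : ℝ,
      ξ₁ + ξ₂ + ξ₃ = 0 → τ₁ + τ₂ + τ₃ = 0 →
      1 ≤ |ξ₁| → 1 ≤ |ξ₂| → 1 ≤ |ξ₃| →
      1 ≤ C * ((2 + |τ₁ - ξ₁ ^ 3|) ^ ((1 : ℝ) / 2) +
          (2 + |τ₂ - ξ₂ ^ 3|) ^ ((1 : ℝ) / 2) +
          (2 + |τ₃ - ξ₃ ^ 3|) ^ ((1 : ℝ) / 2)) /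
        ((2 + |ξ₁|) ^ ((1 : ℝ) / 2) * (2 + |ξ₂|) ^ ((1 : ℝ) / 2) *
          (2 + |ξ₃|) ^ ((1 : ℝ) / 2)) := by
  refine ⟨3, by norm_num, ?_⟩
  intro ξ₁ ξ₂ ξ₃ τ₁ τ₂ τ₃ hξ hτ h1 h2 h3
  simp only [← Real.sqrt_eq_rpow]
  set a₁ := 2 + |τ₁ - ξ₁ ^ 3| with ha₁
  set a₂ := 2 + |τ₂ - ξ₂ ^ 3| with ha₂
  set a₃ := 2 + |τ₃ - ξ₃ ^ 3| with ha₃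
  set p₁ := 2 + |ξ₁| with hp₁
  set p₂ := 2 + |ξ₂| with hp₂
  set p₃ := 2 + |ξ₃| with hp₃
  have hp1 : 0 < p₁ := by positivity
  have hp2 : 0 < p₂ := by positivity
  have hp3 : 0 < p₃ := by positivity
  -- identity and key bound
  have hcube : ξ₁ ^ 3 + ξ₂ ^ 3 + ξ₃ ^ 3 = 3 * (ξ₁ * ξ₂ * ξ₃) := by
    have h3 : ξ₃ = -ξ₁ - ξ₂ := by linarith
    rw [h3]; ring
  have hkey : 3 * |ξ₁ * ξ₂ * ξ₃| ≤ a₁ + a₂ + a₃ := by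
    have hid : 3 * (ξ₁ * ξ₂ * ξ₃) = -((τ₁ - ξ₁ ^ 3) + (τ₂ - ξ₂ ^ 3) + (τ₃ - ξ₃ ^ 3)) := by
      linarith
    have habs : |3 * (ξ₁ * ξ₂ * ξ₃)| ≤ |τ₁ - ξ₁ ^ 3| + |τ₂ - ξ₂ ^ 3| + |τ₃ - ξ₃ ^ 3| := by
      rw [hid, abs_neg]
      calc |(τ₁ - ξ₁ ^ 3) + (τ₂ - ξ₂ ^ 3) + (τ₃ - ξ₃ ^ 3)|
          ≤ |(τ₁ - ξ₁ ^ 3) + (τ₂ - ξ₂ ^ 3)| + |τ₃ - ξ₃ ^ 3| := abs_add_le _ _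
        _ ≤ |τ₁ - ξ₁ ^ 3| + |τ₂ - ξ₂ ^ 3| + |τ₃ - ξ₃ ^ 3| := by
            have := abs_add_le (τ₁ - ξ₁ ^ 3) (τ₂ - ξ₂ ^ 3); linarith
    rw [abs_mul, abs_of_nonneg (by norm_num : (0:ℝ) ≤ 3)] at habs
    simp only [ha₁, ha₂, ha₃]
    linarith
  have hprod : p₁ * p₂ * p₃ ≤ 9 * (a₁ + a₂ + a₃) := by
    have h1' : p₁ ≤ 3 * |ξ₁| := by simp only [hp₁]; linarith
    have h2' : p₂ ≤ 3 * |ξ₂| := by simp only [hp₂]; linarith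
    have h3' : p₃ ≤ 3 * |ξ₃| := by simp only [hp₃]; linarith
    have habs : |ξ₁ * ξ₂ * ξ₃| = |ξ₁| * |ξ₂| * |ξ₃| := by rw [abs_mul, abs_mul]
    have hm : p₁ * p₂ * p₃ ≤ (3 * |ξ₁|) * (3 * |ξ₂|) * (3 * |ξ₃|) :=
      mul_le_mul (mul_le_mul h1' h2' hp2.le (by positivity)) h3' hp3.le (by positivity)
    nlinarith [hm, hkey, habs]
  -- denominator positive
  have hden : 0 < Real.sqrt p₁ * Real.sqrt p₂ * Real.sqrt p₃ := by positivity
  rw [le_div_iff₀ hden, one_mul]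
  have hcomb : Real.sqrt p₁ * Real.sqrt p₂ * Real.sqrt p₃ = Real.sqrt (p₁ * p₂ * p₃) := by
    rw [Real.sqrt_mul (by positivity), Real.sqrt_mul hp1.le]
  rw [hcomb]
  set s₁ := Real.sqrt a₁ with hs₁
  set s₂ := Real.sqrt a₂ with hs₂
  set s₃ := Real.sqrt a₃ with hs₃
  have hs1 : 0 ≤ s₁ := Real.sqrt_nonneg _
  have hs2 : 0 ≤ s₂ := Real.sqrt_nonneg _
  have hs3 : 0 ≤ s₃ := Real.sqrt_nonneg _
  have hq1 : s₁ ^ 2 = a₁ := Real.sq_sqrt (by positivity)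
  have hq2 : s₂ ^ 2 = a₂ := Real.sq_sqrt (by positivity)
  have hq3 : s₃ ^ 2 = a₃ := Real.sq_sqrt (by positivity)
  have hgoal : p₁ * p₂ * p₃ ≤ (3 * (s₁ + s₂ + s₃)) ^ 2 := by
    nlinarith [mul_nonneg hs1 hs2, mul_nonneg hs2 hs3, mul_nonneg hs1 hs3]
  calc Real.sqrt (p₁ * p₂ * p₃) ≤ Real.sqrt ((3 * (s₁ + s₂ + s₃)) ^ 2) :=
        Real.sqrt_le_sqrt hgoal
    _ = 3 * (s₁ + s₂ + s₃) := Real.sqrt_sq (by positivity)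
end
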